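/- Frobenius-norm closeness of the leave-one-out degree matrix (first bound of the Lemma on L_[i]): Define, for each fixed index i ∈ {1,…,n}, the random diagonal matrix L_[i] by (L_[i])_i := L_i and, for j ≠ i, (L_[i])_j := Λ_j + (qβ_n)^{−1}·( Σ_{s≠i} W_{js} + (τ_j/n)·Σ_{t≠i, s≠i} W_{ts} ). Then there exist constants C₆ > 0 and c₆ > 0, depending only on C₀, such that for all sufficiently large n and every i ∈ {1,…,n}, with probability at least 1 − e^{−c₆ξ}, ‖L − L_[i]‖_F ≤ C₆/(q·β_n), where ‖·‖_F denotes the Frobenius norm. -/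

import Mathlib

open MeasureTheory Matrix Filter ProbabilityTheory

noncomputable section

/-- The parameter `ξ = (log n)^{1+a₀}`. -/
def xiPar (n : ℕ) (a₀ : ℝ) : ℝ := Real.log n ^ ((1 : ℝ) + a₀)

/-- Data of the rescaled model at dimension `n`: sample space, probability measure,
sparsity parameter `q`, regularization parameters `τ`, `λ`, noise matrix `W`,
signal matrix `H`, rank `K`, number of strong spikes `K₀`, population spiked
eigenvalues `δ` / eigenvectors `v` (1-based indexing), empirical eigenvalues
`δhat` / eigenvectors `vhat` (1-based indexing), and the QVE measures `ν`. -/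
structure Mdl (n : ℕ) where
  Ω : Type
  mΩ : MeasurableSpace Ω
  μ : @MeasureTheory.Measure Ω mΩ
  q : ℝ
  τ : Fin n → ℝ
  lam : Fin n → ℝ
  W : Ω → Matrix (Fin n) (Fin n) ℝ
  H : Matrix (Fin n) (Fin n) ℝ
  K : ℕ
  K₀ : ℕ
  δ : ℕ → ℝ
  v : ℕ → Fin n → ℝ
  δhat : Ω → ℕ → ℝ
  vhat : Ω → ℕ → Fin n → ℝ
  ν : Fin n → MeasureTheory.Measure ℝ

attribute [instance] Mdl.mΩ

namespace Mdl

variable {n : ℕ} (M : Mdl n)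

/-- entry variances `s_{ij} = E[W_{ij}²]` -/
def s (i j : Fin n) : ℝ := ∫ ω, (M.W ω i j) ^ 2 ∂M.μ

/-- `θ_i = q⁻¹ ∑_j H_{ij}` -/
def θ (i : Fin n) : ℝ := (∑ j, M.H i j) / M.q

/-- `θ̄ = n⁻¹ ∑_i θ_i` -/
def θbar : ℝ := (∑ i, M.θ i) / n

/-- `β_n = min_i (θ_i + τ_i θ̄ + λ_i/q²)` -/
def β : ℝ := ⨅ i : Fin n, (M.θ i + M.τ i * M.θbar + M.lam i / M.q ^ 2)

/-- degrees `d_i = ∑_j X̃_{ij}` -/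
def d (ω : M.Ω) (i : Fin n) : ℝ := ∑ j, (M.H i j + M.W ω i j)

/-- `d̄ = n⁻¹ ∑_j d_j` -/
def dbar (ω : M.Ω) : ℝ := (∑ j, M.d ω j) / n

/-- diagonal entries of `L = (qβ)⁻¹ diag(d_i + τ_i d̄ + λ_i/q)` -/
def Ld (ω : M.Ω) (i : Fin n) : ℝ :=
  (M.d ω i + M.τ i * M.dbar ω + M.lam i / M.q) / (M.q * M.β)

/-- diagonal entries of `Λ = E[L]` -/
def Λd (i : Fin n) : ℝ := (M.θ i + M.τ i * M.θbar + M.lam i / M.q ^ 2) / M.β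

/-- `W̄ = Λ^{-α} W Λ^{-α}` -/
def Wb (α : ℝ) (ω : M.Ω) : Matrix (Fin n) (Fin n) ℝ :=
  Matrix.diagonal (fun i => M.Λd i ^ (-α)) * M.W ω * Matrix.diagonal (fun i => M.Λd i ^ (-α))

/-- the generalized Laplacian `X = L^{-α} X̃ L^{-α}` -/
def X (α : ℝ) (ω : M.Ω) : Matrix (Fin n) (Fin n) ℝ :=
  Matrix.diagonal (fun i => M.Ld ω i ^ (-α)) * (M.H + M.W ω) *
    Matrix.diagonal (fun i => M.Ld ω i ^ (-α))

/-- `(L/Λ)^a` -/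
def LΛpow (a : ℝ) (ω : M.Ω) : Matrix (Fin n) (Fin n) ℝ :=
  Matrix.diagonal fun i => (M.Ld ω i / M.Λd i) ^ a

/-- `(L−Λ)/Λ` -/
def ELL (ω : M.Ω) : Matrix (Fin n) (Fin n) ℝ :=
  Matrix.diagonal fun i => (M.Ld ω i - M.Λd i) / M.Λd i

/-- `‖V‖_max` -/
def Vmax : ℝ := ⨆ k : {x : ℕ // x ∈ Finset.Icc 1 M.K}, ⨆ i : Fin n, |M.v (k : ℕ) i|

/-- `‖v_k‖_∞` -/
def vinf (k : ℕ) : ℝ := ⨆ i : Fin n, |M.v k i|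

/-- `ψ_n(δ_k)` -/
def ψ (a₀ : ℝ) (k : ℕ) : ℝ :=
  1 / (|M.δ k| * M.β) + xiPar n a₀ / (M.q * M.β ^ 2) + M.Vmax

/-- `𝔐 = max{1, max_i ∑_j Λ_i^{-2α} s_{ij} Λ_j^{-2α}}` -/
def frakM (α : ℝ) : ℝ :=
  max 1 (⨆ i : Fin n, M.Λd i ^ (-(2 * α)) * ∑ j, M.Λd j ^ (-(2 * α)) * M.s i j)

/-- real Stieltjes transform `M_i(x) = ∫ (t−x)⁻¹ dν_i(t)` -/
def Mre (i : Fin n) (x : ℝ) : ℝ := ∫ t, (t - x)⁻¹ ∂(M.ν i)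

/-- complex Stieltjes transform `M_i(z)` -/
def Mc (i : Fin n) (z : ℂ) : ℂ := ∫ t, ((t : ℂ) - z)⁻¹ ∂(M.ν i)

/-- `Υ(x) = diag(M_i(x))` (real argument) -/
def Υ (x : ℝ) : Matrix (Fin n) (Fin n) ℝ := Matrix.diagonal fun i => M.Mre i x

/-- `Υ(z)` (complex argument) -/
def Υc (z : ℂ) : Matrix (Fin n) (Fin n) ℂ := Matrix.diagonal fun i => M.Mc i z

/-- `Υ'(x)`, entrywise derivative -/
def Υd (x : ℝ) : Matrix (Fin n) (Fin n) ℝ := Matrix.diagonal fun i => deriv (M.Mre i) x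

/-- `V₋ₖ`: the spiked eigenvector matrix with the `k`-th column removed -/
def Vm (k : ℕ) : Matrix (Fin n) {x : ℕ // x ∈ (Finset.Icc 1 M.K).erase k} ℝ :=
  Matrix.of fun i j => M.v (j : ℕ) i

/-- `Δ₋ₖ` -/
def Dm (k : ℕ) :
    Matrix {x : ℕ // x ∈ (Finset.Icc 1 M.K).erase k}
      {x : ℕ // x ∈ (Finset.Icc 1 M.K).erase k} ℝ :=
  Matrix.diagonal fun j => M.δ (j : ℕ)

/-- `Δ₋ₖ⁻¹ + V₋ₖᵀ Υ(x) V₋ₖ` -/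
def denom (k : ℕ) (x : ℝ) :
    Matrix {x : ℕ // x ∈ (Finset.Icc 1 M.K).erase k}
      {x : ℕ // x ∈ (Finset.Icc 1 M.K).erase k} ℝ :=
  (M.Dm k)⁻¹ + (M.Vm k)ᵀ * M.Υ x * M.Vm k

/-- `Υ_k(x) = Υ(x) − Υ(x)V₋ₖ(Δ₋ₖ⁻¹+V₋ₖᵀΥ(x)V₋ₖ)⁻¹V₋ₖᵀΥ(x)` -/
def Υk (k : ℕ) (x : ℝ) : Matrix (Fin n) (Fin n) ℝ :=
  M.Υ x - M.Υ x * M.Vm k * (M.denom k x)⁻¹ * (M.Vm k)ᵀ * M.Υ x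

/-- `v_kᵀ Υ_k(x) v_k` -/
def Υkq (k : ℕ) (x : ℝ) : ℝ := M.v k ⬝ᵥ (M.Υk k x).mulVec (M.v k)

/-- the master equation
`1 + δ_k v_kᵀΥ(x)v_k − δ_k v_kᵀΥ(x)V₋ₖ(Δ₋ₖ⁻¹+V₋ₖᵀΥ(x)V₋ₖ)⁻¹V₋ₖᵀΥ(x)v_k` -/
def masterF (k : ℕ) (x : ℝ) : ℝ :=
  1 + M.δ k * (M.v k ⬝ᵥ (M.Υ x).mulVec (M.v k)) -
    M.δ k * (M.v k ⬝ᵥ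
      (M.Υ x * M.Vm k * (M.denom k x)⁻¹ * (M.Vm k)ᵀ * M.Υ x).mulVec (M.v k))

/-- `Ĩ_k` -/
def Itil (ε₀ : ℝ) (k : ℕ) : Set ℝ :=
  {x | |M.δ k| / (1 + ε₀ / 2) ≤ |x| ∧ |x| ≤ (1 + ε₀ / 2) * |M.δ k|}

/-- `‖uᵀV₋ₖ‖` -/
def uVmNorm (k : ℕ) (u : Fin n → ℝ) : ℝ :=
  Real.sqrt (∑ j : {x : ℕ // x ∈ (Finset.Icc 1 M.K).erase k}, (∑ i, u i * M.v (j : ℕ) i) ^ 2)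

/-- `v_kᵀ((L−Λ)/Λ)v_k` -/
def qf1 (k : ℕ) (ω : M.Ω) : ℝ := M.v k ⬝ᵥ (M.ELL ω).mulVec (M.v k)

/-- `v_kᵀ((L−Λ)/Λ)²v_k` -/
def qf2 (k : ℕ) (ω : M.Ω) : ℝ := M.v k ⬝ᵥ (M.ELL ω * M.ELL ω).mulVec (M.v k)

/-- `v_kᵀ((L−Λ)/Λ)W̄v_k` -/
def qf3 (α : ℝ) (k : ℕ) (ω : M.Ω) : ℝ := M.v k ⬝ᵥ (M.ELL ω * M.Wb α ω).mulVec (M.v k)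

/-- `v_kᵀW̄v_k` -/
def qfW (α : ℝ) (k : ℕ) (ω : M.Ω) : ℝ := M.v k ⬝ᵥ (M.Wb α ω).mulVec (M.v k)

/-- `v_kᵀW̄²v_k` -/
def qfW2 (α : ℝ) (k : ℕ) (ω : M.Ω) : ℝ :=
  M.v k ⬝ᵥ (M.Wb α ω * M.Wb α ω).mulVec (M.v k)

/-- `Λ_j` accessed with a (0-based) natural-number index -/
def ΛdN (j : ℕ) : ℝ := if h : j < n then M.Λd ⟨j, h⟩ else 0

/-- `L_j` accessed with a (0-based) natural-number index -/
def LdN (ω : M.Ω) (j : ℕ) : ℝ := if h : j < n then M.Ld ω ⟨j, h⟩ else 0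

/-- entry of `v_k` accessed with a (0-based) natural-number index -/
def vN (k j : ℕ) : ℝ := if h : j < n then M.v k ⟨j, h⟩ else 0

/-- entry of `v̂_k` accessed with a (0-based) natural-number index -/
def vhatN (ω : M.Ω) (k j : ℕ) : ℝ := if h : j < n then M.vhat ω k ⟨j, h⟩ else 0

/-- `s_{jl}` with first index a (0-based) natural number -/
def sN (j : ℕ) (l : Fin n) : ℝ := if h : j < n then M.s ⟨j, h⟩ l else 0

/-- the complexified matrix `W̄ − z (L/Λ)^{2α}` -/
def Amat (α : ℝ) (ω : M.Ω) (z : ℂ) : Matrix (Fin n) (Fin n) ℂ :=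
  (M.Wb α ω).map (fun x : ℝ => (x : ℂ)) - z • (M.LΛpow (2 * α) ω).map (fun x : ℝ => (x : ℂ))

/-- Basic hypotheses of the rescaled model. -/
structure HBase (M : Mdl n) (α C₀ a₀ : ℝ) : Prop where
  hn : 2 ≤ n
  prob : IsProbabilityMeasure M.μ
  hq1 : xiPar n a₀ ^ (3 : ℕ) ≤ M.q
  hq2 : M.q ≤ C₀ * Real.sqrt n
  hτ0 : ∀ i, 0 ≤ M.τ i
  hτ1 : ∀ i, M.τ i ≤ C₀
  hlam0 : ∀ i, 0 ≤ M.lam i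
  hlam1 : ∀ i, M.lam i ≤ C₀ * M.q ^ 2
  hWsym : ∀ ω, (M.W ω)ᵀ = M.W ω
  hWmeas : ∀ i j, Measurable fun ω => M.W ω i j
  hWindep : iIndepFun
    (fun (p : {p : Fin n × Fin n // p.1 ≤ p.2}) => fun ω => M.W ω p.1.1 p.1.2) M.μ
  hWint : ∀ (i j : Fin n) (p : ℕ), (p : ℝ) ≤ xiPar n a₀ →
    Integrable (fun ω => |M.W ω i j| ^ p) M.μ
  hWmean : ∀ i j, ∫ ω, M.W ω i j ∂M.μ = 0
  hWvar : ∀ i j, M.s i j ≤ C₀ / n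
  hWmom : ∀ (i j : Fin n) (p : ℕ), 3 ≤ p → (p : ℝ) ≤ xiPar n a₀ →
    ∫ ω, |M.W ω i j| ^ p ∂M.μ ≤ C₀ ^ p / (n * M.q ^ ((p : ℝ) - 2))
  hHsym : M.Hᵀ = M.H
  hHnn : ∀ i j, 0 ≤ M.H i j
  hK : 1 ≤ M.K
  hrank : M.H.rank = M.K
  hθ : ∀ i, M.θ i ≤ C₀
  hβ : 0 < M.β
  hLpos : ∀ᵐ ω ∂M.μ, ∀ i, 0 < M.Ld ω i

/-- QVE hypotheses. -/
structure HQVE (M : Mdl n) (α : ℝ) : Prop where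
  hνprob : ∀ i, IsProbabilityMeasure (M.ν i)
  hνsupp : ∀ i,
    (M.ν i) (Set.Icc (-(2 * Real.sqrt (M.frakM α))) (2 * Real.sqrt (M.frakM α)))ᶜ = 0
  hQVE : ∀ z : ℂ, 2 * Real.sqrt (M.frakM α) < ‖z‖ → ∀ i,
    (M.Mc i z)⁻¹ = -z - ((M.Λd i ^ (-(2 * α)) : ℝ) : ℂ) *
      ∑ j, ((M.Λd j ^ (-(2 * α)) : ℝ) : ℂ) * (M.s i j : ℂ) * M.Mc j z

/-- Spike hypotheses: population and empirical eigendecompositions. -/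
structure HSpike (M : Mdl n) (α : ℝ) : Prop where
  hK₀1 : 1 ≤ M.K₀
  hK₀2 : M.K₀ ≤ M.K
  hdecomp :
    Matrix.diagonal (fun i => M.Λd i ^ (-α)) * M.H * Matrix.diagonal (fun i => M.Λd i ^ (-α)) =
      ∑ k ∈ Finset.Icc 1 M.K, M.δ k • Matrix.vecMulVec (M.v k) (M.v k)
  hortho : ∀ k ∈ Finset.Icc 1 M.K, ∀ l ∈ Finset.Icc 1 M.K,
    M.v k ⬝ᵥ M.v l = if k = l then 1 else 0
  hδne : ∀ k ∈ Finset.Icc 1 M.K, M.δ k ≠ 0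
  hδmono : ∀ k ∈ Finset.Icc 1 M.K, ∀ l ∈ Finset.Icc 1 M.K, k ≤ l → |M.δ l| ≤ |M.δ k|
  hδzero : ∀ k, M.K < k → M.δ k = 0
  hδhatmeas : ∀ k, Measurable fun ω => M.δhat ω k
  hvhatmeas : ∀ k i, Measurable fun ω => M.vhat ω k i
  hhat : ∀ᵐ ω ∂M.μ,
    (∀ k ∈ Finset.Icc 1 n, (M.X α ω).mulVec (M.vhat ω k) = M.δhat ω k • M.vhat ω k) ∧
    (∀ k ∈ Finset.Icc 1 n, ∀ l ∈ Finset.Icc 1 n,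
      M.vhat ω k ⬝ᵥ M.vhat ω l = if k = l then 1 else 0) ∧
    (∀ k ∈ Finset.Icc 1 n, ∀ l ∈ Finset.Icc 1 n, k ≤ l → |M.δhat ω l| ≤ |M.δhat ω k|)

end Mdl

/-- "with high probability" for a sequence of events. -/
def WHP (Ms : (n : ℕ) → Mdl n) (E : (n : ℕ) → Set (Ms n).Ω) : Prop :=
  ∀ D : ℝ, 0 < D → ∃ N : ℕ, ∀ n, N ≤ n →
    1 - ENNReal.ofReal ((n : ℝ) ^ (-D)) ≤ (Ms n).μ (E n)

/-- The asymptotic setting: a sequence of models satisfying the model hypotheses and the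
asymptotic conditions (i)–(iv). -/
structure Asym (Ms : (n : ℕ) → Mdl n) (α C₀ a₀ ε₀ : ℝ) : Prop where
  hα : 0 < α
  hC₀ : 1 ≤ C₀
  ha₀ : 0 < a₀
  hε₀ : 0 < ε₀
  base : ∀ n, 2 ≤ n → (Ms n).HBase α C₀ a₀
  qve : ∀ n, 2 ≤ n → (Ms n).HQVE α
  spike : ∀ n, 2 ≤ n → (Ms n).HSpike α
  hq : Tendsto (fun n => (Ms n).q / Real.log n ^ (4 : ℕ)) atTop atTop
  hδK₀ : Tendsto (fun n => |(Ms n).δ (Ms n).K₀|) atTop atTop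
  hgap : ∀ n, 2 ≤ n → ∀ k ∈ Finset.Icc 1 (Ms n).K₀,
    (1 + ε₀) * |(Ms n).δ (k + 1)| < |(Ms n).δ k|
  hcond : Tendsto
    (fun n => ((Ms n).K : ℝ) * xiPar n a₀ * (Ms n).ψ a₀ (Ms n).K₀ / (Ms n).q) atTop (nhds 0)

/-- Limit locations: `t_k ∈ Ĩ_k` solves the master equation, for every `1 ≤ k ≤ K₀`. -/
def LimLoc (Ms : (n : ℕ) → Mdl n) (ε₀ : ℝ) (t : (n : ℕ) → ℕ → ℝ) : Prop :=
  ∀ n, 2 ≤ n → ∀ k ∈ Finset.Icc 1 (Ms n).K₀,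
    t n k ∈ (Ms n).Itil ε₀ k ∧ (Ms n).masterF k (t n k) = 0


/-- the leave-one-out degree matrix `L_[i]` -/
def Mdl.Lbr {n : ℕ} (M : Mdl n) (i : Fin n) (ω : M.Ω) (j : Fin n) : ℝ :=
  if j = i then M.Ld ω j
  else M.Λd j + (M.q * M.β)⁻¹ *
    ((∑ s ∈ Finset.univ.erase i, M.W ω j s) +
      (M.τ j / n) * ∑ t ∈ Finset.univ.erase i, ∑ s ∈ Finset.univ.erase i, M.W ω t s)

/-! On the event `∑ₗ W_{il}² ≤ 5 C₀` the bound is deterministic: for `j ≠ i`,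
`L_j − (L_[i])_j = (qβ)⁻¹ (W_{ji} + τ_j/n · D)` with `D` the sum of the `i`-th row and column
of `W`, and Cauchy–Schwarz gives `|D|² ≤ 4n ∑ₗ W_{il}²`, hence `‖L − L_[i]‖_F ≤ 8 C₀²/(qβ)`.
That event fails with probability at most `e^{−ξ}`. Truncate the squares at `ξ⁻¹`: an entry with
`W_{il}² > ξ⁻¹` is excluded by Markov's inequality for the moment of order `2⌊ξ/2⌋ ≤ ξ`, which
`q ≥ ξ³` makes of size `ξ^{6−3⌊ξ/2⌋} ≤ e^{−3ξ}`; the truncated sum obeys a Chernoff bound with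
parameter `ξ`, because `e^y ≤ 1 + (e − 1) y` on `[0, 1]` bounds each factor of the mgf by
`exp((e − 1) ξ s_{il})`. -/

lemma Real.exp_le_one_add_mul_of_mem_Icc {y : ℝ} (h0 : 0 ≤ y) (h1 : y ≤ 1) :
    Real.exp y ≤ 1 + (Real.exp 1 - 1) * y := by
  have h := convexOn_exp.2 (Set.mem_univ 0) (Set.mem_univ 1) (sub_nonneg.2 h1) h0
    (sub_add_cancel 1 y)
  simp only [smul_eq_mul, mul_zero, mul_one, zero_add, Real.exp_zero] at h
  linarith

lemma setOf_lt_sum_subset_union {Ω ι : Type*} [Fintype ι] (f : ι → Ω → ℝ) (a ε : ℝ) :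
    {ω | a < ∑ l, f l ω} ⊆ (⋃ l, {ω | ε < f l ω}) ∪ {ω | a ≤ ∑ l, min (f l ω) ε} := by
  intro ω hω
  by_cases hbig : ∃ l, ε < f l ω
  · exact Or.inl (Set.mem_iUnion.2 hbig)
  · push Not at hbig
    right
    simp only [Set.mem_ofPred_eq, min_eq_left (hbig _)] at hω ⊢
    exact hω.le

section Concentration

variable {Ω ι : Type*} [MeasurableSpace Ω] {μ : Measure Ω}

lemma iIndepFun_row_of_transpose_eq [LinearOrder ι] {W : Ω → Matrix ι ι ℝ}
    (hsym : ∀ ω, (W ω)ᵀ = W ω)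
    (hind : iIndepFun (fun p : {p : ι × ι // p.1 ≤ p.2} => fun ω => W ω p.1.1 p.1.2) μ)
    (i : ι) :
    iIndepFun (fun l ω => W ω i l) μ := by
  let g : ι → {p : ι × ι // p.1 ≤ p.2} := fun l => ⟨(min i l, max i l), min_le_max⟩
  have hg : g.Injective := by
    intro a b hab
    simp only [g, Subtype.mk.injEq, Prod.mk.injEq] at hab
    rcases le_total i a with ha | ha <;> rcases le_total i b with hb | hb <;>
      simp_all
  convert hind.precomp hg using 2 with l
  funext ω
  rcases le_total i l with h | h
  · simp [g, h]
  · simp only [g, min_eq_right h, max_eq_left h]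
    exact congrFun (congrFun (hsym ω) l) i

lemma measureReal_lt_sq_le [IsFiniteMeasure μ] {X : Ω → ℝ} {ε : ℝ} (hε : 0 < ε) (m : ℕ)
    (hint : Integrable (fun ω => |X ω| ^ (2 * m)) μ) :
    μ.real {ω | ε < X ω ^ 2} ≤ (ε ^ m)⁻¹ * ∫ ω, |X ω| ^ (2 * m) ∂μ := by
  have hsub : {ω | ε < X ω ^ 2} ⊆ {ω | ε ^ m ≤ |X ω| ^ (2 * m)} := fun ω hω => by
    simp only [Set.mem_ofPred_eq, pow_mul, sq_abs] at hω ⊢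
    exact pow_le_pow_left₀ hε.le hω.le m
  have hmarkov := mul_meas_ge_le_integral_of_nonneg
    (Filter.Eventually.of_forall fun ω => by positivity) hint (ε ^ m)
  rw [le_inv_mul_iff₀ (by positivity)]
  exact (mul_le_mul_of_nonneg_left (measureReal_mono hsub) (by positivity)).trans hmarkov

variable [IsProbabilityMeasure μ]

lemma mgf_le_exp_of_nonneg_of_le_inv {Y : Ω → ℝ} {t : ℝ} (ht : 0 < t) (hY : Measurable Y)
    (h0 : ∀ ω, 0 ≤ Y ω) (h1 : ∀ ω, Y ω ≤ t⁻¹) :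
    mgf Y μ t ≤ Real.exp ((Real.exp 1 - 1) * t * μ[Y]) := by
  have htY : ∀ ω, t * Y ω ≤ 1 := fun ω => by
    simpa [ht.ne'] using mul_le_mul_of_nonneg_left (h1 ω) ht.le
  have hint : Integrable Y μ :=
    Integrable.of_bound hY.aestronglyMeasurable t⁻¹
      (Filter.Eventually.of_forall fun ω => by simpa [abs_of_nonneg (h0 ω)] using h1 ω)
  calc mgf Y μ t ≤ ∫ ω, (1 + (Real.exp 1 - 1) * (t * Y ω)) ∂μ := by
        refine integral_mono_of_nonneg (Filter.Eventually.of_forall fun ω => by positivity)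
          ((integrable_const 1).add (hint.const_mul t |>.const_mul _))
          (Filter.Eventually.of_forall fun ω => ?_)
        exact Real.exp_le_one_add_mul_of_mem_Icc (mul_nonneg ht.le (h0 ω)) (htY ω)
    _ = 1 + (Real.exp 1 - 1) * t * μ[Y] := by
        rw [integral_add (integrable_const 1) (hint.const_mul t |>.const_mul _),
          integral_const_mul, integral_const_mul]
        simp [mul_assoc]
    _ ≤ _ := by linarith [Real.add_one_le_exp ((Real.exp 1 - 1) * t * μ[Y])]

lemma measureReal_le_sum_of_iIndepFun_of_nonneg_of_le_inv [Fintype ι] {Y : ι → Ω → ℝ}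
    {t : ℝ} (a : ℝ) (ht : 0 < t) (hind : iIndepFun Y μ) (hY : ∀ l, Measurable (Y l))
    (h0 : ∀ l ω, 0 ≤ Y l ω) (h1 : ∀ l ω, Y l ω ≤ t⁻¹) :
    μ.real {ω | a ≤ ∑ l, Y l ω} ≤
      Real.exp (-t * a + (Real.exp 1 - 1) * t * ∑ l, μ[Y l]) := by
  have hbound : ∀ ω, ‖Real.exp (t * (∑ l, Y l) ω)‖ ≤ Real.exp (t * ∑ _l : ι, t⁻¹) := by
    intro ω
    rw [Real.norm_eq_abs, abs_of_pos (Real.exp_pos _), Real.exp_le_exp, Finset.sum_apply]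
    exact mul_le_mul_of_nonneg_left (Finset.sum_le_sum fun l _ => h1 l ω) ht.le
  have hint : Integrable (fun ω => Real.exp (t * (∑ l, Y l) ω)) μ :=
    Integrable.of_bound (by fun_prop) _ (Filter.Eventually.of_forall hbound)
  have hchernoff := measure_ge_le_exp_mul_mgf a ht.le hint
  simp only [Finset.sum_apply] at hchernoff
  refine hchernoff.trans ?_
  rw [hind.mgf_sum hY, Real.exp_add, Finset.mul_sum, Real.exp_sum]
  gcongr with l
  · exact fun l _ => mgf_nonneg
  · exact mgf_le_exp_of_nonneg_of_le_inv ht (hY l) (h0 l) (h1 l)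

lemma measureReal_lt_sum_sq_le [Fintype ι] {X : ι → Ω → ℝ} (hind : iIndepFun X μ)
    (hX : ∀ l, Measurable (X l)) {t : ℝ} (a : ℝ) (ht : 0 < t) (m : ℕ)
    (hmom : ∀ l, Integrable (fun ω => |X l ω| ^ (2 * m)) μ)
    (hsq : ∀ l, Integrable (fun ω => X l ω ^ 2) μ) :
    μ.real {ω | a < ∑ l, X l ω ^ 2} ≤
      t ^ m * ∑ l, ∫ ω, |X l ω| ^ (2 * m) ∂μ +
        Real.exp (-t * a + (Real.exp 1 - 1) * t * ∑ l, ∫ ω, X l ω ^ 2 ∂μ) := by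
  set Y : ι → Ω → ℝ := fun l ω => min (X l ω ^ 2) t⁻¹
  have hY : ∀ l, Measurable (Y l) := fun l => ((hX l).pow_const 2).min measurable_const
  have hYint : ∀ l, Integrable (Y l) μ := fun l =>
    Integrable.of_bound (hY l).aestronglyMeasurable t⁻¹ (Filter.Eventually.of_forall
      fun ω => by simp [Y, abs_of_nonneg (le_min (sq_nonneg _) (inv_pos.2 ht).le)])
  have hchernoff := measureReal_le_sum_of_iIndepFun_of_nonneg_of_le_inv a ht
    (hind.comp _ fun _ => (measurable_id.pow_const 2).min measurable_const) hY
    (fun l ω => le_min (sq_nonneg _) (inv_pos.2 ht).le) (fun l ω => min_le_right _ _)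
  calc μ.real {ω | a < ∑ l, X l ω ^ 2}
      ≤ ∑ l, μ.real {ω | t⁻¹ < X l ω ^ 2} + μ.real {ω | a ≤ ∑ l, Y l ω} :=
        (measureReal_mono (setOf_lt_sum_subset_union _ a t⁻¹)).trans
          ((measureReal_union_le _ _).trans (by gcongr; exact measureReal_iUnion_fintype_le _))
    _ ≤ _ := by
        rw [Finset.mul_sum]
        gcongr with l
        · simpa using measureReal_lt_sq_le (inv_pos.2 ht) m (hmom l)
        · refine hchernoff.trans (Real.exp_le_exp.2 ?_)
          gcongr with l
          · exact mul_nonneg (by linarith [Real.add_one_le_exp 1]) ht.le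
          · exact hYint l
          · exact hsq l
          · exact fun ω => min_le_left _ _

end Concentration

lemma pow_mul_div_rpow_le_rpow {ξ C q : ℝ} {m : ℕ} (hξ : 0 < ξ) (hC : 0 ≤ C) (hCξ : C ≤ ξ)
    (hq : ξ ^ 3 ≤ q) (hm : 1 ≤ m) :
    ξ ^ m * (C ^ (2 * m) / q ^ (((2 * m : ℕ) : ℝ) - 2)) ≤ ξ ^ (6 - 3 * (m : ℝ)) := by
  have hr : (0 : ℝ) ≤ ((2 * m : ℕ) : ℝ) - 2 := by
    push_cast; linarith [(Nat.one_le_cast.2 hm : (1 : ℝ) ≤ m)]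
  calc ξ ^ m * (C ^ (2 * m) / q ^ (((2 * m : ℕ) : ℝ) - 2))
      ≤ ξ ^ m * (ξ ^ (2 * m) / (ξ ^ 3) ^ (((2 * m : ℕ) : ℝ) - 2)) := by
        gcongr
    _ = ξ ^ (6 - 3 * (m : ℝ)) := by
        rw [← Real.rpow_natCast ξ 3, ← Real.rpow_mul hξ.le, ← Real.rpow_natCast ξ m,
          ← Real.rpow_natCast ξ (2 * m), ← Real.rpow_sub hξ, ← Real.rpow_add hξ]
        push_cast
        ring_nf

lemma rpow_six_sub_three_mul_le_exp {ξ : ℝ} {m : ℕ} (hξ : Real.exp 8 ≤ ξ)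
    (hm : ξ < 2 * m + 2) :
    ξ ^ (6 - 3 * (m : ℝ)) ≤ Real.exp (-(3 * ξ)) := by
  have hξ9 : 9 ≤ ξ := by linarith [Real.add_one_le_exp 8]
  have hlog : 8 ≤ Real.log ξ := by
    rw [Real.le_log_iff_exp_le (by linarith)]; exact hξ
  rw [Real.rpow_def_of_pos (by linarith), Real.exp_le_exp]
  nlinarith [mul_le_mul_of_nonneg_right hlog (by linarith : (0 : ℝ) ≤ 3 * m - 6)]


lemma Matrix.sum_sum_sq_diagonal_sub_diagonal {ι : Type*} [Fintype ι] [DecidableEq ι]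
    (a b : ι → ℝ) :
    ∑ j, ∑ l, (diagonal a j l - diagonal b j l) ^ 2 = ∑ j, (a j - b j) ^ 2 := by
  refine Finset.sum_congr rfl fun j _ => ?_
  rw [Finset.sum_eq_single j (fun l _ hl => by simp [diagonal_apply_ne' _ hl]) (by simp)]
  simp

lemma Matrix.IsSymm.sq_sum_row_add_sum_col_erase_le {ι : Type*} [Fintype ι] [DecidableEq ι]
    {W : Matrix ι ι ℝ} (hW : W.IsSymm) (i : ι) :
    ((∑ s, W i s) + ∑ t ∈ Finset.univ.erase i, W t i) ^ 2 ≤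
      4 * Fintype.card ι * ∑ s, W i s ^ 2 := by
  have hcol : |∑ t ∈ Finset.univ.erase i, W t i| ≤ ∑ s, |W i s| := by
    refine (Finset.abs_sum_le_sum_abs _ _).trans ?_
    simp only [hW.apply i]
    exact Finset.sum_le_sum_of_subset_of_nonneg (Finset.subset_univ _)
      fun _ _ _ => abs_nonneg _
  have hrow := Finset.abs_sum_le_sum_abs (fun s => W i s) Finset.univ
  have hcs : (∑ s, |W i s|) ^ 2 ≤ Fintype.card ι * ∑ s, W i s ^ 2 := by
    simpa using sq_sum_le_card_mul_sum_sq (s := Finset.univ) (f := fun s => |W i s|)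
  calc _ ≤ (2 * ∑ s, |W i s|) ^ 2 := by
        rw [← sq_abs]
        exact pow_le_pow_left₀ (abs_nonneg _) ((abs_add_le _ _).trans (by linarith)) 2
    _ ≤ _ := by linarith

namespace Mdl

variable {n : ℕ} (M : Mdl n)

lemma Ld_sub_Λd (hq : M.q ≠ 0) (hβ : M.β ≠ 0) (ω : M.Ω) (j : Fin n) :
    M.Ld ω j - M.Λd j =
      (M.q * M.β)⁻¹ * ((∑ l, M.W ω j l) + M.τ j / n * ∑ t, ∑ s, M.W ω t s) := by
  have hn : (n : ℝ) ≠ 0 := Nat.cast_ne_zero.2 (Fin.pos j).ne'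
  have hd : ∀ t, M.d ω t = M.q * M.θ t + ∑ l, M.W ω t l := fun t => by
    simp only [d, θ, Finset.sum_add_distrib]
    field_simp
  have hdbar : M.dbar ω = M.q * M.θbar + (∑ t, ∑ s, M.W ω t s) / n := by
    simp only [dbar, θbar, hd, Finset.sum_add_distrib, ← Finset.mul_sum]
    field_simp
  rw [Ld, Λd, hd, hdbar]
  field_simp
  ring

lemma Ld_sub_Lbr (hq : M.q ≠ 0) (hβ : M.β ≠ 0) (ω : M.Ω) {i j : Fin n} (hj : j ≠ i) :
    M.Ld ω j - M.Lbr i ω j = (M.q * M.β)⁻¹ * (M.W ω j i +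
      M.τ j / n * ((∑ s, M.W ω i s) + ∑ t ∈ Finset.univ.erase i, M.W ω t i)) := by
  have hsplit : ∀ f : Fin n → ℝ, ∑ s, f s = f i + ∑ s ∈ Finset.univ.erase i, f s :=
    fun f => (Finset.add_sum_erase _ _ (Finset.mem_univ i)).symm
  have hrow := hsplit (M.W ω j)
  have htotal : ∑ t, ∑ s, M.W ω t s = (∑ s, M.W ω i s) +
      ∑ t ∈ Finset.univ.erase i, (M.W ω t i + ∑ s ∈ Finset.univ.erase i, M.W ω t s) := by
    rw [hsplit fun t => ∑ s, M.W ω t s]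
    congr 1
    exact Finset.sum_congr rfl fun t _ => hsplit (M.W ω t)
  rw [Lbr, if_neg hj, ← sub_sub, M.Ld_sub_Λd hq hβ, hrow, htotal, Finset.sum_add_distrib]
  ring

lemma sq_Ld_sub_Lbr_le (hq : M.q ≠ 0) (hβ : M.β ≠ 0) {C₀ : ℝ} (hτ0 : ∀ j, 0 ≤ M.τ j)
    (hτ1 : ∀ j, M.τ j ≤ C₀) (ω : M.Ω) (hW : (M.W ω).IsSymm) (i j : Fin n) :
    (M.Ld ω j - M.Lbr i ω j) ^ 2 ≤
      (M.q * M.β)⁻¹ ^ 2 * (2 * M.W ω i j ^ 2 + 8 * C₀ ^ 2 * (∑ l, M.W ω i l ^ 2) / n) := by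
  rcases eq_or_ne j i with rfl | hj
  · rw [Lbr, if_pos rfl, sub_self, zero_pow two_ne_zero]
    positivity
  have hn : (0 : ℝ) < n := Nat.cast_pos.2 (Fin.pos i)
  set D := (∑ s, M.W ω i s) + ∑ t ∈ Finset.univ.erase i, M.W ω t i
  have hD : D ^ 2 ≤ 4 * n * ∑ l, M.W ω i l ^ 2 := by
    simpa only [Fintype.card_fin] using hW.sq_sum_row_add_sum_col_erase_le i
  have hτ : (M.τ j / n) ^ 2 ≤ (C₀ / n) ^ 2 := by
    gcongr
    exacts [div_nonneg (hτ0 j) hn.le, hτ1 j]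
  rw [M.Ld_sub_Lbr hq hβ ω hj, mul_pow, hW.apply i j]
  gcongr
  calc (M.W ω i j + M.τ j / n * D) ^ 2
      ≤ 2 * M.W ω i j ^ 2 + 2 * ((M.τ j / n) ^ 2 * D ^ 2) := by
        nlinarith [sq_nonneg (M.W ω i j - M.τ j / n * D)]
    _ ≤ 2 * M.W ω i j ^ 2 + 2 * ((C₀ / n) ^ 2 * (4 * n * ∑ l, M.W ω i l ^ 2)) := by
        gcongr
    _ = _ := by field_simp; ring

lemma sqrt_sum_sq_diagonal_Ld_sub_Lbr_le (hq : 0 < M.q) (hβ : 0 < M.β) {C₀ : ℝ}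
    (hC₀ : 1 ≤ C₀) (hτ0 : ∀ j, 0 ≤ M.τ j) (hτ1 : ∀ j, M.τ j ≤ C₀) (ω : M.Ω)
    (hW : (M.W ω).IsSymm) (i : Fin n) (hrow : ∑ l, M.W ω i l ^ 2 ≤ 5 * C₀) :
    Real.sqrt (∑ j, ∑ l, (diagonal (M.Ld ω) j l - diagonal (M.Lbr i ω) j l) ^ 2) ≤
      8 * C₀ ^ 2 / (M.q * M.β) := by
  have hn : (n : ℝ) ≠ 0 := Nat.cast_ne_zero.2 (Fin.pos i).ne'
  rw [Matrix.sum_sum_sq_diagonal_sub_diagonal, Real.sqrt_le_left (by positivity)]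
  calc ∑ j, (M.Ld ω j - M.Lbr i ω j) ^ 2
      ≤ ∑ j, (M.q * M.β)⁻¹ ^ 2 *
          (2 * M.W ω i j ^ 2 + 8 * C₀ ^ 2 * (∑ l, M.W ω i l ^ 2) / n) :=
        Finset.sum_le_sum fun j _ => M.sq_Ld_sub_Lbr_le hq.ne' hβ.ne' hτ0 hτ1 ω hW i j
    _ = (M.q * M.β)⁻¹ ^ 2 * ((2 + 8 * C₀ ^ 2) * ∑ l, M.W ω i l ^ 2) := by
        rw [← Finset.mul_sum, Finset.sum_add_distrib, ← Finset.mul_sum, Finset.sum_const,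
          Finset.card_univ, Fintype.card_fin, nsmul_eq_mul]
        field_simp
    _ ≤ (M.q * M.β)⁻¹ ^ 2 * (64 * C₀ ^ 4) := by
        refine mul_le_mul_of_nonneg_left ?_ (by positivity)
        have h1 : C₀ ≤ C₀ ^ 4 := le_self_pow₀ hC₀ (by norm_num)
        have h3 : C₀ ^ 3 ≤ C₀ ^ 4 := pow_le_pow_right₀ hC₀ (by norm_num)
        calc (2 + 8 * C₀ ^ 2) * ∑ l, M.W ω i l ^ 2 ≤ (2 + 8 * C₀ ^ 2) * (5 * C₀) := by gcongr
          _ ≤ 64 * C₀ ^ 4 := by linarith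
    _ = _ := by ring

lemma measure_lt_rowNormSq_le {α C₀ a₀ : ℝ} (hB : M.HBase α C₀ a₀)
    (hC₀ : 1 ≤ C₀) (hξ : Real.exp 8 ≤ xiPar n a₀) (hC₀ξ : C₀ ≤ xiPar n a₀) (i : Fin n) :
    M.μ {ω | 5 * C₀ < ∑ l, M.W ω i l ^ 2} ≤ ENNReal.ofReal (Real.exp (-xiPar n a₀)) := by
  have := hB.prob
  set ξ := xiPar n a₀
  have hξ9 : 9 ≤ ξ := by linarith [Real.add_one_le_exp 8]
  have hn : (0 : ℝ) < n := by exact_mod_cast (Fin.pos i)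
  set m := ⌊ξ / 2⌋₊
  have hm_le : ((2 * m : ℕ) : ℝ) ≤ ξ := by
    push_cast
    linarith [Nat.floor_le (by linarith : 0 ≤ ξ / 2)]
  have hm_gt : ξ < 2 * m + 2 := by linarith [Nat.lt_floor_add_one (ξ / 2)]
  have hm2 : 2 ≤ m := by
    have : (2 : ℝ) ≤ m := by linarith
    exact_mod_cast this
  have hq : ξ ^ 3 ≤ M.q := hB.hq1
  have hmom : ∑ l, ∫ ω, |M.W ω i l| ^ (2 * m) ∂M.μ ≤
      C₀ ^ (2 * m) / M.q ^ (((2 * m : ℕ) : ℝ) - 2) := by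
    calc ∑ l, ∫ ω, |M.W ω i l| ^ (2 * m) ∂M.μ
        ≤ ∑ _l : Fin n, C₀ ^ (2 * m) / (n * M.q ^ (((2 * m : ℕ) : ℝ) - 2)) :=
          Finset.sum_le_sum fun l _ => hB.hWmom i l (2 * m) (by omega) hm_le
      _ = _ := by
          rw [Finset.sum_const, Finset.card_univ, Fintype.card_fin, nsmul_eq_mul]
          field_simp
  have hvar : ∑ l, ∫ ω, M.W ω i l ^ 2 ∂M.μ ≤ C₀ := by
    calc ∑ l, M.s i l ≤ ∑ _l : Fin n, C₀ / n := Finset.sum_le_sum fun l _ => hB.hWvar i l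
      _ = C₀ := by
          rw [Finset.sum_const, Finset.card_univ, Fintype.card_fin, nsmul_eq_mul]
          field_simp
  have htail := measureReal_lt_sum_sq_le
    (iIndepFun_row_of_transpose_eq hB.hWsym hB.hWindep i) (fun l => hB.hWmeas i l) (5 * C₀)
    (by linarith : 0 < ξ) m (fun l => hB.hWint i l (2 * m) hm_le)
    (fun l => by simpa using hB.hWint i l 2 (by push_cast; linarith))
  have hmarkov : ξ ^ m * ∑ l, ∫ ω, |M.W ω i l| ^ (2 * m) ∂M.μ ≤ Real.exp (-(3 * ξ)) :=
    calc _ ≤ ξ ^ m * (C₀ ^ (2 * m) / M.q ^ (((2 * m : ℕ) : ℝ) - 2)) := by gcongr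
      _ ≤ ξ ^ (6 - 3 * (m : ℝ)) :=
          pow_mul_div_rpow_le_rpow (by linarith) (by linarith) hC₀ξ hq (by omega)
      _ ≤ _ := rpow_six_sub_three_mul_le_exp hξ hm_gt
  have hchernoff : Real.exp (-ξ * (5 * C₀) +
      (Real.exp 1 - 1) * ξ * ∑ l, ∫ ω, M.W ω i l ^ 2 ∂M.μ) ≤ Real.exp (-(3 * ξ)) := by
    have he : Real.exp 1 - 1 ≤ 2 := by linarith [Real.exp_one_lt_d9]
    have he0 : 0 ≤ Real.exp 1 - 1 := by linarith [Real.add_one_le_exp 1]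
    rw [Real.exp_le_exp]
    nlinarith [mul_le_mul he (mul_le_mul_of_nonneg_left hvar (by linarith : (0 : ℝ) ≤ ξ))
      (by positivity) (by norm_num)]
  have hsum : 2 * Real.exp (-(3 * ξ)) ≤ Real.exp (-ξ) := by
    have : 2 ≤ Real.exp (2 * ξ) := by linarith [Real.add_one_le_exp (2 * ξ)]
    calc 2 * Real.exp (-(3 * ξ)) ≤ Real.exp (2 * ξ) * Real.exp (-(3 * ξ)) := by gcongr
      _ = Real.exp (-ξ) := by rw [← Real.exp_add]; ring_nf
  rw [← ofReal_measureReal]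
  exact ENNReal.ofReal_le_ofReal (by linarith)

end Mdl

/-- Frobenius-norm closeness of the leave-one-out degree matrix. -/
theorem stmt_12 (C₀ : ℝ) (hC₀ : 1 ≤ C₀) :
    ∃ C₆ c₆ : ℝ, 0 < C₆ ∧ 0 < c₆ ∧
      ∀ α a₀ : ℝ, 0 < α → 0 < a₀ → ∃ N : ℕ,
        ∀ n : ℕ, N ≤ n → ∀ M : Mdl n, M.HBase α C₀ a₀ → ∀ i : Fin n,
          1 - ENNReal.ofReal (Real.exp (-(c₆ * xiPar n a₀))) ≤
            M.μ {ω | Real.sqrt (∑ j, ∑ l,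
              (Matrix.diagonal (M.Ld ω) j l - Matrix.diagonal (M.Lbr i ω) j l) ^ 2) ≤
                C₆ / (M.q * M.β)} := by
  refine ⟨8 * C₀ ^ 2, 1, by positivity, one_pos, fun α a₀ _ ha₀ => ?_⟩
  have hξ : Tendsto (fun n : ℕ => xiPar n a₀) atTop atTop :=
    (tendsto_rpow_atTop (by linarith)).comp
      (Real.tendsto_log_atTop.comp tendsto_natCast_atTop_atTop)
  obtain ⟨N, hN⟩ := eventually_atTop.1 (hξ.eventually_ge_atTop (max (Real.exp 8) C₀))
  refine ⟨N, fun n hn M hB i => ?_⟩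
  have := hB.prob
  obtain ⟨hξ8, hC₀ξ⟩ := max_le_iff.1 (hN n hn)
  have hq : 0 < M.q := (pow_pos ((Real.exp_pos 8).trans_le hξ8) 3).trans_le hB.hq1
  have hbad : MeasurableSet {ω | 5 * C₀ < ∑ l, M.W ω i l ^ 2} :=
    measurableSet_lt measurable_const
      (Finset.measurable_sum _ fun l _ => (hB.hWmeas i l).pow_const 2)
  rw [one_mul]
  calc 1 - ENNReal.ofReal (Real.exp (-xiPar n a₀))
      ≤ 1 - M.μ {ω | 5 * C₀ < ∑ l, M.W ω i l ^ 2} :=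
        tsub_le_tsub_left (M.measure_lt_rowNormSq_le hB hC₀ hξ8 hC₀ξ i) 1
    _ = M.μ {ω | 5 * C₀ < ∑ l, M.W ω i l ^ 2}ᶜ := (prob_compl_eq_one_sub hbad).symm
    _ ≤ _ := measure_mono fun ω hω =>
        M.sqrt_sum_sq_diagonal_Ld_sub_Lbr_le hq hB.hβ hC₀ hB.hτ0 hB.hτ1 ω (hB.hWsym ω) i
          (not_lt.1 hω)

end
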